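/- arXiv:hep-th/9705024 — 8 statements merged into one kernel-verified Lean document; each statement's English description precedes it below -/
import Mathlib

section
/- Let E be a real normed vector space, p ∈ E, n ∈ ℕ, and let σ, P₁, …, Pₙ : E →L[ℝ] ℝ be continuous linear functionals. Let e₁, X, Z₁, …, Zₙ : E → ℝ be differentiable at p and satisfy the N=4 normal-frame differential relations at p: fderiv e₁ p = (Σᵢ Zᵢ(p) • Pᵢ) − e₁(p) • σ, fderiv X p = 2·X(p) • σ, and fderiv Zᵢ p = 2·e₁(p) • Pᵢ − Zᵢ(p) • σ for each i. Then the black-hole potential V = 2e₁² + 4X² + Σᵢ Zᵢ² satisfies fderiv V p = (−4·e₁(p)² + 16·X(p)² − 2·Σᵢ Zᵢ(p)²) • σ + Σᵢ (8·e₁(p)·Zᵢ(p)) • Pᵢ. -/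
theorem HasFDerivAt.sq {𝕜 E : Type*} [NontriviallyNormedField 𝕜] [NormedAddCommGroup E]
    [NormedSpace 𝕜 E] {f : E → 𝕜} {f' : E →L[𝕜] 𝕜} {p : E} (hf : HasFDerivAt f f' p) :
    HasFDerivAt (fun x => f x ^ 2) ((2 * f p) • f') p := by
  simpa using hf.pow 2

theorem hasFDerivAt_potential {𝕜 E ι : Type*} [NontriviallyNormedField 𝕜]
    [NormedAddCommGroup E] [NormedSpace 𝕜 E] [Fintype ι] {p : E} {e₁ X : E → 𝕜}
    {Z : ι → E → 𝕜} {e' X' : E →L[𝕜] 𝕜} {Z' : ι → E →L[𝕜] 𝕜} (he₁ : HasFDerivAt e₁ e' p) (hX : HasFDerivAt X X' p)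
    (hZ : ∀ i, HasFDerivAt (Z i) (Z' i) p) :
    HasFDerivAt (fun x => 2 * e₁ x ^ 2 + 4 * X x ^ 2 + ∑ i, Z i x ^ 2)
      ((4 * e₁ p) • e' + (8 * X p) • X' + ∑ i, (2 * Z i p) • Z' i) p := by
  refine (((he₁.sq.const_mul 2).add (hX.sq.const_mul 4)).add
    (HasFDerivAt.fun_sum (u := Finset.univ) fun i _ => (hZ i).sq)).congr_fderiv ?_
  module

theorem normalFrame_gradient_eq {R M ι : Type*} [CommRing R] [AddCommGroup M] [Module R M]
    [Fintype ι] (σ : M) (P : ι → M) (e x : R) (z : ι → R) :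
    (4 * e) • ((∑ i, z i • P i) - e • σ) + (8 * x) • ((2 * x) • σ)
        + ∑ i, (2 * z i) • ((2 * e) • P i - z i • σ)
      = (-4 * e ^ 2 + 16 * x ^ 2 - 2 * ∑ i, z i ^ 2) • σ + ∑ i, (8 * e * z i) • P i := by
  calc _ = (-4 * e ^ 2 + 16 * x ^ 2) • σ
          + ∑ i, ((4 * e) • (z i • P i) + (2 * z i) • ((2 * e) • P i - z i • σ)) := by
        rw [Finset.sum_add_distrib, ← Finset.smul_sum]; module
    _ = (-4 * e ^ 2 + 16 * x ^ 2) • σ + ∑ i, ((8 * e * z i) • P i - (2 * z i ^ 2) • σ) := by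
        congr 1; exact Finset.sum_congr rfl fun i _ => by module
    _ = _ := by
        rw [Finset.sum_sub_distrib, ← Finset.sum_smul, ← Finset.mul_sum]; module

/-- N=4, D=5 supergravity, normal frame: the derivative of the black-hole
potential `V = 2e₁² + 4X² + Σᵢ Zᵢ²` in terms of the vielbein functionals. -/
theorem n4_potential_derivative {E : Type*} [NormedAddCommGroup E] [NormedSpace ℝ E]
    (p : E) (n : ℕ) (σ : E →L[ℝ] ℝ) (P : Fin n → E →L[ℝ] ℝ)
    (e₁ X : E → ℝ) (Z : Fin n → E → ℝ)
    (he₁ : DifferentiableAt ℝ e₁ p) (hX : DifferentiableAt ℝ X p)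
    (hZ : ∀ i, DifferentiableAt ℝ (Z i) p)
    (de₁ : fderiv ℝ e₁ p = (∑ i, Z i p • P i) - e₁ p • σ)
    (dX : fderiv ℝ X p = (2 * X p) • σ)
    (dZ : ∀ i, fderiv ℝ (Z i) p = (2 * e₁ p) • P i - Z i p • σ) :
    fderiv ℝ (fun x => 2 * e₁ x ^ 2 + 4 * X x ^ 2 + ∑ i, Z i x ^ 2) p
      = (-4 * e₁ p ^ 2 + 16 * X p ^ 2 - 2 * ∑ i, Z i p ^ 2) • σ
        + ∑ i, (8 * e₁ p * Z i p) • P i := by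
  rw [(hasFDerivAt_potential he₁.hasFDerivAt hX.hasFDerivAt
    fun i => (hZ i).hasFDerivAt).fderiv, de₁, dX]
  simp only [dZ]
  exact normalFrame_gradient_eq σ P (e₁ p) (X p) fun i => Z i p
end

section
/- Let E be a real normed vector space, p ∈ E, and let σ, P₁, …, Pₙ : E →L[ℝ] ℝ be linearly independent continuous linear functionals. Let e₁, X, Z₁, …, Zₙ : E → ℝ be differentiable at p and satisfy at p: fderiv e₁ p = (Σᵢ Zᵢ(p) • Pᵢ) − e₁(p) • σ, fderiv X p = 2·X(p) • σ, fderiv Zᵢ p = 2·e₁(p) • Pᵢ − Zᵢ(p) • σ. Suppose p is a critical point of V = 2e₁² + 4X² + Σᵢ Zᵢ² (i.e. fderiv V p = 0) and e₁(p) ≠ 0. Then Zᵢ(p) = 0 for all i and e₁(p)² = 4·X(p)²; moreover, if e₁(p) = −2·X(p), then V(p) = 3·e₁(p)² = (4/3)·(e₁(p) − X(p))². -/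
/-!
Differentiating `V` with the chain rule and substituting the relations for `de₁`, `dX`, `dZᵢ`
expresses `dV` as `(16X² − 4e₁² − 2ΣZᵢ²) σ + Σᵢ 8e₁Zᵢ Pᵢ`. Since `σ, P₁, …, Pₙ` are linearly
independent, every coefficient vanishes: `e₁ ≠ 0` kills the `Zᵢ`, and then `e₁² = 4X²`.
On the branch `e₁ = −2X` the values of `V` follow by arithmetic.
-/

open Finset

theorem LinearIndependent.eq_zero_of_smul_add_sum_eq_zero {R M : Type*} [Ring R]
    [AddCommGroup M] [Module R M] {n : ℕ} {x : M} {v : Fin n → M}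
    (h : LinearIndependent R (Fin.cons x v : Fin (n + 1) → M)) {a : R} {b : Fin n → R}
    (hab : a • x + ∑ i, b i • v i = 0) : a = 0 ∧ ∀ i, b i = 0 := by
  have hc := Fintype.linearIndependent_iff.mp h (Fin.cons a b)
    (by simpa [Fin.sum_univ_succ] using hab)
  exact ⟨hc 0, fun i => hc i.succ⟩

theorem HasFDerivAt.potential {E ι : Type*} [NormedAddCommGroup E] [NormedSpace ℝ E]
    [Fintype ι] {p : E} {e X : E → ℝ} {Z : ι → E → ℝ} {e' X' : E →L[ℝ] ℝ}
    {Z' : ι → E →L[ℝ] ℝ} (he : HasFDerivAt e e' p) (hX : HasFDerivAt X X' p)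
    (hZ : ∀ i, HasFDerivAt (Z i) (Z' i) p) :
    HasFDerivAt (fun x => 2 * e x ^ 2 + 4 * X x ^ 2 + ∑ i, Z i x ^ 2)
      ((4 * e p) • e' + (8 * X p) • X' + ∑ i, (2 * Z i p) • Z' i) p := by
  have hsq : ∀ {f : E → ℝ} {f' : E →L[ℝ] ℝ}, HasFDerivAt f f' p →
      HasFDerivAt (fun x => f x ^ 2) ((2 * f p) • f') p := fun hf => by
    simpa using hf.pow 2
  refine (((hsq he).const_mul 2).add ((hsq hX).const_mul 4) |>.add
    (HasFDerivAt.fun_sum fun i _ => hsq (hZ i))).congr_fderiv ?_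
  module

theorem potential_gradient_eq {R M ι : Type*} [CommRing R] [AddCommGroup M] [Module R M]
    [Fintype ι] (σ : M) (P : ι → M) (e X : R) (Z : ι → R) :
    (4 * e) • ((∑ i, Z i • P i) - e • σ) + (8 * X) • ((2 * X) • σ)
        + ∑ i, (2 * Z i) • ((2 * e) • P i - Z i • σ)
      = (16 * X ^ 2 - 4 * e ^ 2 - 2 * ∑ i, Z i ^ 2) • σ + ∑ i, (8 * e * Z i) • P i := by
  simp only [smul_sub, smul_sum, smul_smul, sum_sub_distrib, ← sum_smul, mul_sum]
  have hP : ∑ i, (8 * e * Z i) • P i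
      = ∑ i, (4 * e * Z i) • P i + ∑ i, (2 * Z i * (2 * e)) • P i := by
    rw [← sum_add_distrib]
    exact sum_congr rfl fun i _ => by rw [← add_smul]; ring_nf
  have hZ : ∑ i, 2 * Z i ^ 2 = ∑ i, 2 * Z i * Z i := sum_congr rfl fun i _ => by ring
  rw [hP, hZ]
  module

/-- N=4, D=5 supergravity, normal frame: at a critical point of the black-hole
potential `V = 2e₁² + 4X² + Σᵢ Zᵢ²` with `e₁(p) ≠ 0`, the matter charges vanish,
`e₁² = 4X²`, and (if `e₁ = −2X`) `V = 3e₁² = (4/3)(e₁ − X)²`. -/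
theorem n4_attractor {E : Type*} [NormedAddCommGroup E] [NormedSpace ℝ E]
    (p : E) (n : ℕ) (σ : E →L[ℝ] ℝ) (P : Fin n → E →L[ℝ] ℝ)
    (hindep : LinearIndependent ℝ (Fin.cons σ P : Fin (n + 1) → E →L[ℝ] ℝ))
    (e₁ X : E → ℝ) (Z : Fin n → E → ℝ)
    (he₁ : DifferentiableAt ℝ e₁ p) (hX : DifferentiableAt ℝ X p)
    (hZ : ∀ i, DifferentiableAt ℝ (Z i) p)
    (de₁ : fderiv ℝ e₁ p = (∑ i, Z i p • P i) - e₁ p • σ)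
    (dX : fderiv ℝ X p = (2 * X p) • σ)
    (dZ : ∀ i, fderiv ℝ (Z i) p = (2 * e₁ p) • P i - Z i p • σ)
    (hcrit : fderiv ℝ (fun x => 2 * e₁ x ^ 2 + 4 * X x ^ 2 + ∑ i, Z i x ^ 2) p = 0)
    (hne : e₁ p ≠ 0) :
    (∀ i, Z i p = 0) ∧ e₁ p ^ 2 = 4 * X p ^ 2 ∧
      (e₁ p = -2 * X p →
        2 * e₁ p ^ 2 + 4 * X p ^ 2 + ∑ i, Z i p ^ 2 = 3 * e₁ p ^ 2 ∧
        3 * e₁ p ^ 2 = (4 / 3) * (e₁ p - X p) ^ 2) := by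
  have hV := HasFDerivAt.potential (de₁ ▸ he₁.hasFDerivAt) (dX ▸ hX.hasFDerivAt)
    fun i => dZ i ▸ (hZ i).hasFDerivAt
  rw [hV.fderiv, potential_gradient_eq σ P (e₁ p) (X p) fun i => Z i p] at hcrit
  obtain ⟨hσ, hP⟩ := hindep.eq_zero_of_smul_add_sum_eq_zero hcrit
  have hZ₀ : ∀ i, Z i p = 0 := fun i => by simpa [hne] using hP i
  have hsum : ∑ i, Z i p ^ 2 = 0 := by simp [hZ₀]
  have hsq : e₁ p ^ 2 = 4 * X p ^ 2 := by linear_combination -hσ / 4 - hsum / 2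
  refine ⟨hZ₀, hsq, fun hbranch => ⟨?_, ?_⟩⟩
  · rw [hsum, hsq]; ring
  · rw [hbranch]; ring
end

section
/- Let E be a real normed vector space, p ∈ E, and let σ, P₁, …, Pₙ : E →L[ℝ] ℝ be continuous linear functionals. Let e₁, X, Z₁, …, Zₙ : E → ℝ be differentiable at p with fderiv e₁ p = (Σᵢ Zᵢ(p) • Pᵢ) − e₁(p) • σ, fderiv X p = 2·X(p) • σ, fderiv Zᵢ p = 2·e₁(p) • Pᵢ − Zᵢ(p) • σ. Then the cubic invariant I = (2·e₁² − Σᵢ Zᵢ²)·X has vanishing derivative at p: fderiv I p = 0. -/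
/-!
Both factors of the invariant scale along the one-form `σ`: in `d(2e₁²)` and `d(Σᵢ Zᵢ²)` the
`Pᵢ`-components are both `4 e₁ Σᵢ Zᵢ Pᵢ` and cancel, leaving
`d(2e₁² − Σᵢ Zᵢ²) = −2 (2e₁² − Σᵢ Zᵢ²) σ`, while `dX = 2 X σ`. The weights `−2` and `2` of the two
factors add up to zero, so their product is stationary.
-/

section

variable {𝕜 E : Type*} [NontriviallyNormedField 𝕜] [NormedAddCommGroup E] [NormedSpace 𝕜 E]

theorem HasFDerivAt.mul_of_proportional {f g : E → 𝕜} {σ : E →L[𝕜] 𝕜} {a b : 𝕜} {p : E}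
    (hf : HasFDerivAt f ((a * f p) • σ) p) (hg : HasFDerivAt g ((b * g p) • σ) p) :
    HasFDerivAt (fun x => f x * g x) (((a + b) * (f p * g p)) • σ) p := by
  refine (hf.fun_mul hg).congr_fderiv ?_
  ext v
  simp only [smul_apply, add_apply, smul_eq_mul]
  ring

theorem hasFDerivAt_mul_sq_sub_sum_sq {ι : Type*} [Fintype ι] {e : E → 𝕜} {Z : ι → E → 𝕜}
    {σ : E →L[𝕜] 𝕜} {P : ι → E →L[𝕜] 𝕜} {c : 𝕜} {p : E}
    (he : HasFDerivAt e ((∑ i, Z i p • P i) - e p • σ) p)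
    (hZ : ∀ i, HasFDerivAt (Z i) ((c * e p) • P i - Z i p • σ) p) :
    HasFDerivAt (fun x => c * e x ^ 2 - ∑ i, Z i x ^ 2)
      ((-2 * (c * e p ^ 2 - ∑ i, Z i p ^ 2)) • σ) p := by
  refine (((he.pow 2).const_mul c).fun_sub
    (HasFDerivAt.fun_sum fun i _ => (hZ i).pow 2)).congr_fderiv ?_
  ext v
  have hsum : ∑ i, 2 * Z i p * (c * e p * P i v - Z i p * σ v)
      = 2 * c * e p * ∑ i, Z i p * P i v - 2 * (∑ i, Z i p ^ 2) * σ v := by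
    simp only [Finset.mul_sum, Finset.sum_mul, ← Finset.sum_sub_distrib]
    exact Finset.sum_congr rfl fun i _ => by ring
  norm_num only [smul_apply, sub_apply, sum_apply, smul_eq_mul, nsmul_eq_mul, pow_one]
  linear_combination -hsum

end

/-- N=4, D=5 supergravity, normal frame: the cubic U-duality invariant
`I = (2e₁² − Σᵢ Zᵢ²)·X` is moduli independent. -/
theorem n4_cubic_invariant {E : Type*} [NormedAddCommGroup E] [NormedSpace ℝ E]
    (p : E) (n : ℕ) (σ : E →L[ℝ] ℝ) (P : Fin n → E →L[ℝ] ℝ)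
    (e₁ X : E → ℝ) (Z : Fin n → E → ℝ)
    (he₁ : DifferentiableAt ℝ e₁ p) (hX : DifferentiableAt ℝ X p)
    (hZ : ∀ i, DifferentiableAt ℝ (Z i) p)
    (de₁ : fderiv ℝ e₁ p = (∑ i, Z i p • P i) - e₁ p • σ)
    (dX : fderiv ℝ X p = (2 * X p) • σ)
    (dZ : ∀ i, fderiv ℝ (Z i) p = (2 * e₁ p) • P i - Z i p • σ) :
    fderiv ℝ (fun x => (2 * e₁ x ^ 2 - ∑ i, Z i x ^ 2) * X x) p = 0 := by
  have hQ := hasFDerivAt_mul_sq_sub_sum_sq (de₁ ▸ he₁.hasFDerivAt)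
    fun i => dZ i ▸ (hZ i).hasFDerivAt
  rw [(hQ.mul_of_proportional (dX ▸ hX.hasFDerivAt)).fderiv]
  norm_num
end

section
/- Let E be a real normed vector space, p ∈ E, and let P₁, P₂ : E →L[ℝ] ℝ be continuous linear functionals. Let e₁, e₂, X : E → ℝ be differentiable at p, set e₃ = −e₁ − e₂, and suppose at p: fderiv e₁ p = (1/3)·(−e₁(p) + e₂(p) + 2X(p)) • P₁ + (1/3)·(e₁(p) + 2e₂(p)) • P₂, fderiv e₂ p = (1/3)·(2e₁(p) + e₂(p)) • P₁ + (1/3)·(e₁(p) − e₂(p) + 2X(p)) • P₂, fderiv X p = (1/2)·(2e₁(p) + e₂(p)) • P₁ + (1/2)·(e₁(p) + 2e₂(p)) • P₂. Then the potential V = e₁² + e₂² + (e₁ + e₂)² + (4/3)·X² satisfies fderiv V p = (2/3)·(e₁(p) − e₃(p))·(3e₂(p) + 4X(p)) • P₁ + (2/3)·(e₂(p) − e₃(p))·(3e₁(p) + 4X(p)) • P₂. -/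
/-! Sums, constant multiples and squares of functions whose derivative at `p` lies in the span
of `P₁, P₂` again have such a derivative, with explicitly computable coordinates. Building `V`
this way, the claim reduces to a polynomial identity in `e₁ p`, `e₂ p`, `X p`. -/

section SpanCoordinates

variable {E : Type*} [NormedAddCommGroup E] [NormedSpace ℝ E]
  {f g : E → ℝ} {P₁ P₂ : E →L[ℝ] ℝ} {p : E} {a b c d : ℝ}

theorem HasFDerivAt.add_smul_add_smul (hf : HasFDerivAt f (a • P₁ + b • P₂) p)
    (hg : HasFDerivAt g (c • P₁ + d • P₂) p) :
    HasFDerivAt (fun x => f x + g x) ((a + c) • P₁ + (b + d) • P₂) p :=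
  (hf.add hg).congr_fderiv (by module)

theorem HasFDerivAt.const_mul_smul_add_smul (hf : HasFDerivAt f (a • P₁ + b • P₂) p) (k : ℝ) :
    HasFDerivAt (fun x => k * f x) ((k * a) • P₁ + (k * b) • P₂) p :=
  (hf.const_mul k).congr_fderiv (by module)

theorem HasFDerivAt.sq_smul_add_smul (hf : HasFDerivAt f (a • P₁ + b • P₂) p) :
    HasFDerivAt (fun x => f x ^ 2) ((2 * f p * a) • P₁ + (2 * f p * b) • P₂) p :=
  (hf.pow 2).congr_fderiv (by module)

end SpanCoordinates

/-- N=6, D=5 supergravity, normal frame: derivative of the black-hole potential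
`V = e₁² + e₂² + (e₁+e₂)² + (4/3)X²` in terms of the vielbein functionals. -/
theorem n6_potential_derivative {E : Type*} [NormedAddCommGroup E] [NormedSpace ℝ E]
    (p : E) (P₁ P₂ : E →L[ℝ] ℝ) (e₁ e₂ e₃ X : E → ℝ)
    (he₁ : DifferentiableAt ℝ e₁ p) (he₂ : DifferentiableAt ℝ e₂ p)
    (hX : DifferentiableAt ℝ X p)
    (he₃ : e₃ = fun x => -e₁ x - e₂ x)
    (de₁ : fderiv ℝ e₁ p
      = ((1 / 3) * (-e₁ p + e₂ p + 2 * X p)) • P₁ + ((1 / 3) * (e₁ p + 2 * e₂ p)) • P₂)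
    (de₂ : fderiv ℝ e₂ p
      = ((1 / 3) * (2 * e₁ p + e₂ p)) • P₁ + ((1 / 3) * (e₁ p - e₂ p + 2 * X p)) • P₂)
    (dX : fderiv ℝ X p
      = ((1 / 2) * (2 * e₁ p + e₂ p)) • P₁ + ((1 / 2) * (e₁ p + 2 * e₂ p)) • P₂) :
    fderiv ℝ (fun x => e₁ x ^ 2 + e₂ x ^ 2 + (e₁ x + e₂ x) ^ 2 + (4 / 3) * X x ^ 2) p
      = ((2 / 3) * (e₁ p - e₃ p) * (3 * e₂ p + 4 * X p)) • P₁
        + ((2 / 3) * (e₂ p - e₃ p) * (3 * e₁ p + 4 * X p)) • P₂ := by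
  have h₁ : HasFDerivAt e₁ _ p := de₁ ▸ he₁.hasFDerivAt
  have h₂ : HasFDerivAt e₂ _ p := de₂ ▸ he₂.hasFDerivAt
  have hX' : HasFDerivAt X _ p := dX ▸ hX.hasFDerivAt
  have hV := ((h₁.sq_smul_add_smul.add_smul_add_smul h₂.sq_smul_add_smul).add_smul_add_smul
    (h₁.add_smul_add_smul h₂).sq_smul_add_smul).add_smul_add_smul
    (hX'.sq_smul_add_smul.const_mul_smul_add_smul (4 / 3))
  rw [hV.fderiv, he₃]
  congr 2 <;> ring
end

section
/- Let E be a real normed vector space, p ∈ E, and let P₁, P₂ : E →L[ℝ] ℝ be linearly independent continuous linear functionals. Let e₁, e₂, X : E → ℝ be differentiable at p, set e₃ = −e₁ − e₂, and suppose at p: fderiv e₁ p = (1/3)·(−e₁(p) + e₂(p) + 2X(p)) • P₁ + (1/3)·(e₁(p) + 2e₂(p)) • P₂, fderiv e₂ p = (1/3)·(2e₁(p) + e₂(p)) • P₁ + (1/3)·(e₁(p) − e₂(p) + 2X(p)) • P₂, fderiv X p = (1/2)·(2e₁(p) + e₂(p)) • P₁ + (1/2)·(e₁(p) + 2e₂(p))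 • P₂. Suppose fderiv V p = 0 for V = e₁² + e₂² + (e₁+e₂)² + (4/3)·X², and that e₁(p) ≠ e₂(p) and e₁(p) ≠ e₃(p). Then e₂(p) = e₃(p) = −(1/2)·e₁(p) = −(4/3)·X(p), and V(p) = (27/16)·e₁(p)² = (4/3)·((9/8)·e₁(p))². -/
/-!
Along the two independent directions `P₁, P₂` the gradient of `V` factorizes as
`(2e₁ + e₂)(2e₂ + 8X/3)` and `(e₁ + 2e₂)(2e₁ + 8X/3)`, i.e. `(e₁ - e₃)(2e₂ + 8X/3)` and
`(e₂ - e₃)(2e₁ + 8X/3)`. Since `e₁ ≠ e₃`, the first forces `X = -3e₂/4`; the second then reads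
`(e₂ - e₃)(e₁ - e₂) = 0`, and `e₁ ≠ e₂` leaves `e₂ = e₃`, i.e. `e₂ = -e₁/2` and `X = 3e₁/8`.
-/

theorem HasFDerivAt.normalFramePotential {E : Type*} [NormedAddCommGroup E] [NormedSpace ℝ E]
    {f g h : E → ℝ} {f' g' h' : E →L[ℝ] ℝ} {p : E}
    (hf : HasFDerivAt f f' p) (hg : HasFDerivAt g g' p) (hh : HasFDerivAt h h' p) :
    HasFDerivAt (fun x => f x ^ 2 + g x ^ 2 + (f x + g x) ^ 2 + (4 / 3) * h x ^ 2)
      ((2 * (2 * f p + g p)) • f' + (2 * (f p + 2 * g p)) • g' + ((8 / 3) * h p) • h') p := by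
  refine ((((hf.pow 2).fun_add (hg.pow 2)).fun_add ((hf.fun_add hg).pow 2)).fun_add
    ((hh.pow 2).const_mul (4 / 3))).congr_fderiv ?_
  simp only [Nat.add_one_sub_one, pow_one, nsmul_eq_mul, Nat.cast_ofNat]
  module

theorem normalFrame_attractor_values {a b c : ℝ}
    (h₁ : (2 * a + b) * (2 * b + 8 / 3 * c) = 0) (h₂ : (a + 2 * b) * (2 * a + 8 / 3 * c) = 0)
    (hab : a ≠ b) (h2ab : 2 * a + b ≠ 0) :
    b = -(1 / 2) * a ∧ c = (3 / 8) * a := by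
  have hc : 2 * b + 8 / 3 * c = 0 := (mul_eq_zero.mp h₁).resolve_left h2ab
  have hb : a + 2 * b = 0 := by
    have : (a + 2 * b) * (a - b) = 0 := by linear_combination h₂ / 2 - (a + 2 * b) * hc / 2
    exact (mul_eq_zero.mp this).resolve_right (sub_ne_zero.mpr hab)
  constructor <;> linarith

/-- N=6, D=5 supergravity, normal frame: at a critical point of the black-hole
potential `V = e₁² + e₂² + (e₁+e₂)² + (4/3)X²` with `e₁ ≠ e₂` and `e₁ ≠ e₃`,
one has `e₂ = e₃ = −(1/2)e₁ = −(4/3)X` and `V = (27/16)e₁² = (4/3)((9/8)e₁)²`. -/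
theorem n6_attractor {E : Type*} [NormedAddCommGroup E] [NormedSpace ℝ E]
    (p : E) (P₁ P₂ : E →L[ℝ] ℝ)
    (hindep : LinearIndependent ℝ ![P₁, P₂])
    (e₁ e₂ e₃ X : E → ℝ)
    (he₁ : DifferentiableAt ℝ e₁ p) (he₂ : DifferentiableAt ℝ e₂ p)
    (hX : DifferentiableAt ℝ X p)
    (he₃ : e₃ = fun x => -e₁ x - e₂ x)
    (de₁ : fderiv ℝ e₁ p
      = ((1 / 3) * (-e₁ p + e₂ p + 2 * X p)) • P₁ + ((1 / 3) * (e₁ p + 2 * e₂ p)) • P₂)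
    (de₂ : fderiv ℝ e₂ p
      = ((1 / 3) * (2 * e₁ p + e₂ p)) • P₁ + ((1 / 3) * (e₁ p - e₂ p + 2 * X p)) • P₂)
    (dX : fderiv ℝ X p
      = ((1 / 2) * (2 * e₁ p + e₂ p)) • P₁ + ((1 / 2) * (e₁ p + 2 * e₂ p)) • P₂)
    (hcrit : fderiv ℝ
      (fun x => e₁ x ^ 2 + e₂ x ^ 2 + (e₁ x + e₂ x) ^ 2 + (4 / 3) * X x ^ 2) p = 0)
    (hne₁₂ : e₁ p ≠ e₂ p) (hne₁₃ : e₁ p ≠ e₃ p) :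
    e₂ p = e₃ p ∧ e₃ p = -(1 / 2) * e₁ p ∧ e₃ p = -(4 / 3) * X p ∧
      e₁ p ^ 2 + e₂ p ^ 2 + (e₁ p + e₂ p) ^ 2 + (4 / 3) * X p ^ 2 = (27 / 16) * e₁ p ^ 2 ∧
      (27 / 16) * e₁ p ^ 2 = (4 / 3) * ((9 / 8) * e₁ p) ^ 2 := by
  subst he₃
  dsimp only at hne₁₃ ⊢
  have hV := (he₁.hasFDerivAt.normalFramePotential he₂.hasFDerivAt hX.hasFDerivAt).fderiv
  rw [hcrit, de₁, de₂, dX] at hV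
  have hgrad : ((2 * e₁ p + e₂ p) * (2 * e₂ p + 8 / 3 * X p)) • P₁
      + ((e₁ p + 2 * e₂ p) * (2 * e₁ p + 8 / 3 * X p)) • P₂ = 0 := by
    rw [hV]; module
  obtain ⟨h₁, h₂⟩ := hindep.eq_zero_of_pair hgrad
  obtain ⟨hb, hc⟩ := normalFrame_attractor_values h₁ h₂ hne₁₂ (by intro h; apply hne₁₃; linarith)
  refine ⟨by linarith, by linarith, by linarith, ?_, by ring⟩
  rw [hb, hc]
  ring
end

section
/- Let E be a real normed vector space, p ∈ E, and let P₁, P₂ : E →L[ℝ] ℝ be continuous linear functionals. Let e₁, e₂, X : E → ℝ be differentiable at p and satisfy at p: fderiv e₁ p = (1/3)·(−e₁(p) + e₂(p) + 2X(p)) • P₁ + (1/3)·(e₁(p) + 2e₂(p)) • P₂, fderiv X p = (1/2)·(2e₁(p) + e₂(p)) • P₁ + (1/2)·(e₁(p) + 2e₂(p)) • P₂. If e₂(p) = −(4/3)·X(p) and e₁(p) = (8/3)·X(p), then the mass function M = e₁ + (1/3)·X has vanishing derivative at p: fderiv (e₁ + (1/3)·X) p = 0, and M(p) = (9/8)·e₁(p).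 -/
/-! Combining the two flow equations, the differential of the mass `e₁ + X/3` is
`(e₂/2 + 2X/3) • P₁ + ((e₁ + 2e₂)/2) • P₂`: the `e₁`-contributions to the `P₁`-coefficient
cancel. Both coefficients vanish exactly at the attractor values `e₂ = -(4/3)X`, `e₁ = (8/3)X`. -/

theorem fderiv_mass_of_flow {E : Type*} [NormedAddCommGroup E] [NormedSpace ℝ E]
    {p : E} {P₁ P₂ : E →L[ℝ] ℝ} {e₁ e₂ X : E → ℝ}
    (he₁ : DifferentiableAt ℝ e₁ p) (hX : DifferentiableAt ℝ X p)
    (de₁ : fderiv ℝ e₁ p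
      = ((1 / 3) * (-e₁ p + e₂ p + 2 * X p)) • P₁ + ((1 / 3) * (e₁ p + 2 * e₂ p)) • P₂)
    (dX : fderiv ℝ X p
      = ((1 / 2) * (2 * e₁ p + e₂ p)) • P₁ + ((1 / 2) * (e₁ p + 2 * e₂ p)) • P₂) :
    fderiv ℝ (fun x => e₁ x + (1 / 3) * X x) p
      = ((1 / 2) * e₂ p + (2 / 3) * X p) • P₁ + ((1 / 2) * (e₁ p + 2 * e₂ p)) • P₂ := by
  rw [fderiv_fun_add he₁ (hX.const_mul _), fderiv_const_mul hX, de₁, dX]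
  module

theorem n6_mass_extremized_general {E : Type*} [NormedAddCommGroup E] [NormedSpace ℝ E]
    (p : E) (P₁ P₂ : E →L[ℝ] ℝ) (e₁ e₂ X : E → ℝ)
    (he₁ : DifferentiableAt ℝ e₁ p)
    (hX : DifferentiableAt ℝ X p)
    (de₁ : fderiv ℝ e₁ p
      = ((1 / 3) * (-e₁ p + e₂ p + 2 * X p)) • P₁ + ((1 / 3) * (e₁ p + 2 * e₂ p)) • P₂)
    (dX : fderiv ℝ X p
      = ((1 / 2) * (2 * e₁ p + e₂ p)) • P₁ + ((1 / 2) * (e₁ p + 2 * e₂ p)) • P₂)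
    (hfix₂ : e₂ p = -(4 / 3) * X p) (hfix₁ : e₁ p = (8 / 3) * X p) :
    fderiv ℝ (fun x => e₁ x + (1 / 3) * X x) p = 0 ∧
      e₁ p + (1 / 3) * X p = (9 / 8) * e₁ p := by
  constructor
  · rw [fderiv_mass_of_flow he₁ hX de₁ dX, hfix₂, hfix₁]
    module
  · rw [hfix₁]
    ring

/-- N=6, D=5 supergravity, normal frame: at the attractor point
(`e₂ = −(4/3)X`, `e₁ = (8/3)X`) the BPS mass `M = e₁ + (1/3)X` is extremized
and `M = (9/8)e₁`. -/
theorem n6_mass_extremized {E : Type*} [NormedAddCommGroup E] [NormedSpace ℝ E]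
    (p : E) (P₁ P₂ : E →L[ℝ] ℝ) (e₁ e₂ X : E → ℝ)
    (he₁ : DifferentiableAt ℝ e₁ p) (he₂ : DifferentiableAt ℝ e₂ p)
    (hX : DifferentiableAt ℝ X p)
    (de₁ : fderiv ℝ e₁ p
      = ((1 / 3) * (-e₁ p + e₂ p + 2 * X p)) • P₁ + ((1 / 3) * (e₁ p + 2 * e₂ p)) • P₂)
    (dX : fderiv ℝ X p
      = ((1 / 2) * (2 * e₁ p + e₂ p)) • P₁ + ((1 / 2) * (e₁ p + 2 * e₂ p)) • P₂)
    (hfix₂ : e₂ p = -(4 / 3) * X p) (hfix₁ : e₁ p = (8 / 3) * X p) :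
    fderiv ℝ (fun x => e₁ x + (1 / 3) * X x) p = 0 ∧
      e₁ p + (1 / 3) * X p = (9 / 8) * e₁ p :=
  n6_mass_extremized_general p P₁ P₂ e₁ e₂ X he₁ hX de₁ dX hfix₂ hfix₁
end

section
/- Let E be a real normed vector space, p ∈ E, and let P₁, P₂ : E →L[ℝ] ℝ be continuous linear functionals. Let e₁, e₂, X : E → ℝ be differentiable at p and satisfy at p: fderiv e₁ p = (1/3)·(−e₁(p) + e₂(p) + 2X(p)) • P₁ + (1/3)·(e₁(p) + 2e₂(p)) • P₂, fderiv e₂ p = (1/3)·(2e₁(p) + e₂(p)) • P₁ + (1/3)·(e₁(p) − e₂(p) + 2X(p)) • P₂, fderiv X p = (1/2)·(2e₁(p) + e₂(p)) • P₁ + (1/2)·(e₁(p) + 2e₂(p)) • P₂. Then the cubic invariant I = e₁²·e₂ + e₁·e₂² − (2/3)·(e₁² + e₂² + e₁·e₂)·X + (8/27)·X³ has vanishing derivative at p: fderiv I p = 0. -/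
/-! By the chain rule `dI = ∂₁I • de₁ + ∂₂I • de₂ + ∂₃I • dX`. Substituting the given differentials,
the coefficients of `P₁` and `P₂` become derivatives of the polynomial `I(a, b, x)` along two
polynomial vector fields on `(a, b, x)`-space, and both vanish identically. -/

noncomputable def cubicInvariant (a b x : ℝ) : ℝ :=
  a ^ 2 * b + a * b ^ 2 - (2 / 3) * (a ^ 2 + b ^ 2 + a * b) * x + (8 / 27) * x ^ 3

noncomputable def cubicInvariantPartial₁ (a b x : ℝ) : ℝ :=
  2 * a * b + b ^ 2 - (2 / 3) * (2 * a + b) * x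

noncomputable def cubicInvariantPartial₂ (a b x : ℝ) : ℝ :=
  a ^ 2 + 2 * a * b - (2 / 3) * (a + 2 * b) * x

noncomputable def cubicInvariantPartial₃ (a b x : ℝ) : ℝ :=
  -(2 / 3) * (a ^ 2 + b ^ 2 + a * b) + (8 / 9) * x ^ 2

theorem fderiv_cubicInvariant_comp {E : Type*} [NormedAddCommGroup E] [NormedSpace ℝ E]
    {a b x : E → ℝ} {p : E}
    (ha : DifferentiableAt ℝ a p) (hb : DifferentiableAt ℝ b p) (hx : DifferentiableAt ℝ x p) :
    fderiv ℝ (fun y => cubicInvariant (a y) (b y) (x y)) p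
      = cubicInvariantPartial₁ (a p) (b p) (x p) • fderiv ℝ a p
        + cubicInvariantPartial₂ (a p) (b p) (x p) • fderiv ℝ b p
        + cubicInvariantPartial₃ (a p) (b p) (x p) • fderiv ℝ x p := by
  have ha := ha.hasFDerivAt
  have hb := hb.hasFDerivAt
  have hx := hx.hasFDerivAt
  have h := ((((ha.mul ha).mul hb).add (ha.mul (hb.mul hb))).sub
    (((((ha.mul ha).add (hb.mul hb)).add (ha.mul hb)).mul hx).const_mul (2 / 3))).add
    (((hx.mul hx).mul hx).const_mul (8 / 27))
  have hI : (fun y => cubicInvariant (a y) (b y) (x y)) = fun y => a y * a y * b y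
      + a y * (b y * b y) - 2 / 3 * ((a y * a y + b y * b y + a y * b y) * x y)
      + 8 / 27 * (x y * x y * x y) := by
    funext y
    rw [cubicInvariant]
    ring
  rw [hI]
  refine h.fderiv.trans ?_
  ext v
  simp only [add_apply, sub_apply, smul_apply, smul_eq_mul, Pi.add_apply, Pi.mul_apply,
    cubicInvariantPartial₁, cubicInvariantPartial₂, cubicInvariantPartial₃]
  ring

theorem cubicInvariant_deriv_along_P₁ (a b x : ℝ) :
    cubicInvariantPartial₁ a b x * ((1 / 3) * (-a + b + 2 * x))
      + cubicInvariantPartial₂ a b x * ((1 / 3) * (2 * a + b))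
      + cubicInvariantPartial₃ a b x * ((1 / 2) * (2 * a + b)) = 0 := by
  rw [cubicInvariantPartial₁, cubicInvariantPartial₂, cubicInvariantPartial₃]
  ring

theorem cubicInvariant_deriv_along_P₂ (a b x : ℝ) :
    cubicInvariantPartial₁ a b x * ((1 / 3) * (a + 2 * b))
      + cubicInvariantPartial₂ a b x * ((1 / 3) * (a - b + 2 * x))
      + cubicInvariantPartial₃ a b x * ((1 / 2) * (a + 2 * b)) = 0 := by
  rw [cubicInvariantPartial₁, cubicInvariantPartial₂, cubicInvariantPartial₃]
  ring

/-- N=6, D=5 supergravity, normal frame: the cubic U-duality invariant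
`I = e₁²e₂ + e₁e₂² − (2/3)(e₁² + e₂² + e₁e₂)X + (8/27)X³` is moduli independent. -/
theorem n6_cubic_invariant {E : Type*} [NormedAddCommGroup E] [NormedSpace ℝ E]
    (p : E) (P₁ P₂ : E →L[ℝ] ℝ) (e₁ e₂ X : E → ℝ)
    (he₁ : DifferentiableAt ℝ e₁ p) (he₂ : DifferentiableAt ℝ e₂ p)
    (hX : DifferentiableAt ℝ X p)
    (de₁ : fderiv ℝ e₁ p
      = ((1 / 3) * (-e₁ p + e₂ p + 2 * X p)) • P₁ + ((1 / 3) * (e₁ p + 2 * e₂ p)) • P₂)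
    (de₂ : fderiv ℝ e₂ p
      = ((1 / 3) * (2 * e₁ p + e₂ p)) • P₁ + ((1 / 3) * (e₁ p - e₂ p + 2 * X p)) • P₂)
    (dX : fderiv ℝ X p
      = ((1 / 2) * (2 * e₁ p + e₂ p)) • P₁ + ((1 / 2) * (e₁ p + 2 * e₂ p)) • P₂) :
    fderiv ℝ (fun x => e₁ x ^ 2 * e₂ x + e₁ x * e₂ x ^ 2
      - (2 / 3) * (e₁ x ^ 2 + e₂ x ^ 2 + e₁ x * e₂ x) * X x
      + (8 / 27) * X x ^ 3) p = 0 := by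
  change fderiv ℝ (fun y => cubicInvariant (e₁ y) (e₂ y) (X y)) p = 0
  rw [fderiv_cubicInvariant_comp he₁ he₂ hX, de₁, de₂, dX]
  ext v
  simp only [add_apply, smul_apply, zero_apply, smul_eq_mul]
  linear_combination P₁ v * cubicInvariant_deriv_along_P₁ (e₁ p) (e₂ p) (X p)
    + P₂ v * cubicInvariant_deriv_along_P₂ (e₁ p) (e₂ p) (X p)
end

section
/- Let E be a real normed vector space, p ∈ E, and let P₁, P₂ : E →L[ℝ] ℝ be continuous linear functionals. Let e₁, e₂, e₃ : E → ℝ be differentiable at p, set e₄ = −e₁ − e₂ − e₃, and suppose at p: fderiv e₁ p = (e₁ + 2e₂ + e₃)(p) • P₁ + (e₁ + e₂ + 2e₃)(p) • P₂, fderiv e₂ p = (e₁ − e₃)(p) • P₁ + (−e₁ − e₂ − 2e₃)(p) • P₂, fderiv e₃ p = (−e₁ − 2e₂ − e₃)(p) • P₁ + (e₁ − e₂)(p) • P₂. Then the cubic invariant I = e₁³ + e₂³ + e₃³ + e₄³ has vanishing derivative at p: fderiv I p = 0. -/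
/-! Since `e₄ = −e₁ − e₂ − e₃`, the differential of `I` is `3 ∑ᵢ₌₁³ (eᵢ² − e₄²) deᵢ`. Substituting
the flow equations, the coefficients of `P₁` and of `P₂` are cubic polynomials in `e₁, e₂, e₃`
that vanish identically. -/

theorem HasFDerivAt.cube_sum_add_cube_neg_sum {𝕜 E : Type*} [NontriviallyNormedField 𝕜]
    [NormedAddCommGroup E] [NormedSpace 𝕜 E] {e₁ e₂ e₃ : E → 𝕜} {D₁ D₂ D₃ : E →L[𝕜] 𝕜} {p : E}
    (h₁ : HasFDerivAt e₁ D₁ p) (h₂ : HasFDerivAt e₂ D₂ p) (h₃ : HasFDerivAt e₃ D₃ p) :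
    HasFDerivAt (fun x => e₁ x ^ 3 + e₂ x ^ 3 + e₃ x ^ 3 + (-e₁ x - e₂ x - e₃ x) ^ 3)
      ((3 * (e₁ p ^ 2 - (e₁ p + e₂ p + e₃ p) ^ 2)) • D₁
        + (3 * (e₂ p ^ 2 - (e₁ p + e₂ p + e₃ p) ^ 2)) • D₂
        + (3 * (e₃ p ^ 2 - (e₁ p + e₂ p + e₃ p) ^ 2)) • D₃) p := by
  have h₄ := (h₁.neg.sub h₂).sub h₃
  refine ((((h₁.pow 3).add (h₂.pow 3)).add (h₃.pow 3)).add (h₄.pow 3)).congr_fderiv ?_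
  simp only [Pi.sub_apply, Pi.neg_apply, nsmul_eq_mul, Nat.cast_ofNat]
  module

/-- N=8, D=5 supergravity, normal frame: the cubic U-duality invariant
`I = e₁³ + e₂³ + e₃³ + e₄³` (with `e₄ = −e₁−e₂−e₃`) is moduli independent. -/
theorem n8_cubic_invariant {E : Type*} [NormedAddCommGroup E] [NormedSpace ℝ E]
    (p : E) (P₁ P₂ : E →L[ℝ] ℝ) (e₁ e₂ e₃ e₄ : E → ℝ)
    (he₁ : DifferentiableAt ℝ e₁ p) (he₂ : DifferentiableAt ℝ e₂ p)
    (he₃ : DifferentiableAt ℝ e₃ p)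
    (he₄ : e₄ = fun x => -e₁ x - e₂ x - e₃ x)
    (de₁ : fderiv ℝ e₁ p
      = (e₁ p + 2 * e₂ p + e₃ p) • P₁ + (e₁ p + e₂ p + 2 * e₃ p) • P₂)
    (de₂ : fderiv ℝ e₂ p
      = (e₁ p - e₃ p) • P₁ + (-e₁ p - e₂ p - 2 * e₃ p) • P₂)
    (de₃ : fderiv ℝ e₃ p
      = (-e₁ p - 2 * e₂ p - e₃ p) • P₁ + (e₁ p - e₂ p) • P₂) :
    fderiv ℝ (fun x => e₁ x ^ 3 + e₂ x ^ 3 + e₃ x ^ 3 + e₄ x ^ 3) p = 0 := by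
  subst he₄
  rw [(he₁.hasFDerivAt.cube_sum_add_cube_neg_sum he₂.hasFDerivAt he₃.hasFDerivAt).fderiv,
    de₁, de₂, de₃]
  module
end
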